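/- arXiv:1008.2285 — 7 statements merged into one kernel-verified Lean document; each statement's English description precedes it below -/
import Mathlib

section
/- For ψ ∈ [0,1) and γ ∈ (0, ψ+1), the Gnedin–Fisher Gibbs weights satisfy the backward recursion of genius α = −1: for all integers 1 ≤ k ≤ n, V(n,k) = (n + k)·V(n+1, k) + V(n+1, k+1). -/
/-- Rising factorial `(x)_m = x (x+1) ⋯ (x+m-1)`, with `(x)_0 = 1`. -/
noncomputable def riseFact (x : ℝ) (m : ℕ) : ℝ := ∏ i ∈ Finset.range m, (x + i)

/-- The `(γ, ψ)` Gnedin–Fisher Gibbs weight. -/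
noncomputable def gfWeight (γ ψ : ℝ) (n k : ℕ) : ℝ :=
  riseFact γ (n - k) * riseFact (1 - ψ) (k - 1) * riseFact (1 - γ + ψ) (k - 1) /
    (riseFact (1 + ψ) (n - 1) * riseFact (1 + γ - ψ) (n - 1))

lemma riseFact_succ (x : ℝ) (m : ℕ) : riseFact x (m + 1) = riseFact x m * (x + m) := by
  simp [riseFact, Finset.prod_range_succ]

lemma riseFact_pos {x : ℝ} (hx : 0 < x) (m : ℕ) : 0 < riseFact x m :=
  Finset.prod_pos fun i _ => by positivity

/-- The Gnedin–Fisher Gibbs weights satisfy the backward recursion of genius `α = -1`: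
`V(n,k) = (n + k) V(n+1,k) + V(n+1,k+1)`. -/
theorem gnedin_fisher_backward_recursion (γ ψ : ℝ) (hψ0 : 0 ≤ ψ) (hψ1 : ψ < 1)
    (hγ0 : 0 < γ) (hγ1 : γ < ψ + 1) :
    ∀ n k : ℕ, 1 ≤ k → k ≤ n →
      gfWeight γ ψ n k =
        ((n : ℝ) + k) * gfWeight γ ψ (n + 1) k + gfWeight γ ψ (n + 1) (k + 1) := by
  intro n k hk hkn
  obtain ⟨b, rfl⟩ : ∃ b, k = b + 1 := ⟨k - 1, by omega⟩
  obtain ⟨a, rfl⟩ : ∃ a, n = b + 1 + a := ⟨n - (b + 1), by omega⟩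
  have h1 : (0:ℝ) < 1 + ψ := by linarith
  have h2 : (0:ℝ) < 1 + γ - ψ := by linarith
  have e1 : b + 1 + a - (b + 1) = a := by omega
  have e2 : b + 1 + a + 1 - (b + 1) = a + 1 := by omega
  have e3 : b + 1 + a + 1 - (b + 1 + 1) = a := by omega
  have e4 : b + 1 - 1 = b := by omega
  have e5 : b + 1 + 1 - 1 = b + 1 := by omega
  have e6 : b + 1 + a - 1 = b + a := by omega
  have e7 : b + 1 + a + 1 - 1 = b + a + 1 := by omega
  simp only [gfWeight, e1, e2, e3, e4, e5, e6, e7, riseFact_succ]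
  have hA := (riseFact_pos h1 (b + a)).ne'
  have hB := (riseFact_pos h2 (b + a)).ne'
  have hC : (1 + ψ + (↑(b + a) : ℝ)) ≠ 0 := by push_cast; linarith [(Nat.cast_nonneg (b + a) : (0:ℝ) ≤ _)]
  have hD : (1 + γ - ψ + (↑(b + a) : ℝ)) ≠ 0 := by push_cast; linarith [(Nat.cast_nonneg (b + a) : (0:ℝ) ≤ _)]
  field_simp
  push_cast
  ring
end

section
/- For γ ∈ (0,1) and every integer n ≥ 1, the distribution of the number of occupied boxes of the one-parameter Gnedin–Fisher model is a probability distribution on {1,…,n}: ∑_{k=1}^{n} C(n,k) · (1−γ)_{k−1} · (γ)_{n−k} / (1+γ)_{n−1} = 1, where C(n,k) is the binomial coefficient. -/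
lemma riseFact_zero (x : ℝ) : riseFact x 0 = 1 := by simp [riseFact]

lemma riseFact_shift (x : ℝ) (m : ℕ) : riseFact x (m + 1) = x * riseFact (1 + x) m := by
  rw [riseFact, Finset.prod_range_succ', riseFact]
  rw [mul_comm]
  congr 1
  · push_cast; ring
  · apply Finset.prod_congr rfl
    intro i _
    push_cast
    ring

noncomputable def gfG (γ : ℝ) (n : ℕ) : ℝ :=
  ∑ j ∈ Finset.range n, (n.choose (j + 1) : ℝ) * riseFact (1 - γ) j * riseFact γ (n - 1 - j)

lemma gfG_succ (γ : ℝ) (n : ℕ) : gfG γ (n + 1) = n * gfG γ n + riseFact γ n := by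
  have h1 : gfG γ (n + 1)
      = ∑ j ∈ Finset.range (n + 1),
          ((n.choose j : ℝ) * riseFact (1 - γ) j * riseFact γ (n - j)
           + (n.choose (j + 1) : ℝ) * riseFact (1 - γ) j * riseFact γ (n - j)) := by
    unfold gfG
    apply Finset.sum_congr rfl
    intro j hj
    have : n + 1 - 1 - j = n - j := by omega
    rw [this, Nat.choose_succ_succ]
    push_cast
    ring
  rw [h1, Finset.sum_add_distrib]
  -- second sum: drop the j = n term (choose n (n+1) = 0)
  have h2 : (∑ j ∈ Finset.range (n + 1),
      (n.choose (j + 1) : ℝ) * riseFact (1 - γ) j * riseFact γ (n - j))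
      = ∑ j ∈ Finset.range n,
        (n.choose (j + 1) : ℝ) * riseFact (1 - γ) j
          * (riseFact γ (n - 1 - j) * (γ + (n - 1 - j : ℕ))) := by
    rw [Finset.sum_range_succ]
    simp only [Nat.choose_succ_self, Nat.cast_zero, zero_mul, add_zero]
    apply Finset.sum_congr rfl
    intro j hj
    have hj' : j < n := Finset.mem_range.mp hj
    have : n - j = (n - 1 - j) + 1 := by omega
    rw [this, riseFact_succ]
  -- first sum: peel off the j = 0 term
  have h3 : (∑ j ∈ Finset.range (n + 1),
      (n.choose j : ℝ) * riseFact (1 - γ) j * riseFact γ (n - j))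
      = (∑ j ∈ Finset.range n,
          (n.choose (j + 1) : ℝ) * (riseFact (1 - γ) j * (1 - γ + j)) * riseFact γ (n - 1 - j))
        + riseFact γ n := by
    rw [Finset.sum_range_succ']
    simp only [Nat.choose_zero_right, Nat.cast_one, one_mul, riseFact_zero, Nat.sub_zero]
    congr 1
    apply Finset.sum_congr rfl
    intro j hj
    have : n - (j + 1) = n - 1 - j := by omega
    rw [this, riseFact_succ]
  rw [h2, h3]
  have h4 : (∑ j ∈ Finset.range n,
        (n.choose (j + 1) : ℝ) * (riseFact (1 - γ) j * (1 - γ + j)) * riseFact γ (n - 1 - j))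
      + (∑ j ∈ Finset.range n,
        (n.choose (j + 1) : ℝ) * riseFact (1 - γ) j
          * (riseFact γ (n - 1 - j) * (γ + (n - 1 - j : ℕ))))
      = n * gfG γ n := by
    rw [← Finset.sum_add_distrib]
    unfold gfG
    rw [Finset.mul_sum]
    apply Finset.sum_congr rfl
    intro j hj
    have hj' : j < n := Finset.mem_range.mp hj
    have hc : ((n - 1 - j : ℕ) : ℝ) = (n : ℝ) - 1 - j := by
      have : (1 : ℕ) + j ≤ n := by omega
      push_cast [Nat.sub_sub, Nat.cast_sub this]
      ring
    rw [hc]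
    ring
  linarith [h4]

lemma gamma_mul_gfG (γ : ℝ) (n : ℕ) (hn : 1 ≤ n) : γ * gfG γ n = riseFact γ n := by
  induction n, hn using Nat.le_induction with
  | base =>
    simp [gfG, riseFact]
  | succ n hn ih =>
    rw [gfG_succ, riseFact_succ]
    have h : γ * ((n : ℝ) * gfG γ n + riseFact γ n) = (n : ℝ) * (γ * gfG γ n) + γ * riseFact γ n := by ring
    rw [h, ih]
    ring

/-- The law of the number of occupied boxes of the one-parameter Gnedin–Fisher
model is a probability distribution on `{1, …, n}`. -/
theorem gnedin_fisher_blocks_sum_to_one (γ : ℝ) (hγ0 : 0 < γ) (hγ1 : γ < 1)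
    (n : ℕ) (hn : 1 ≤ n) :
    ∑ k ∈ Finset.Icc 1 n,
        (n.choose k : ℝ) * riseFact (1 - γ) (k - 1) * riseFact γ (n - k) /
          riseFact (1 + γ) (n - 1) = 1 := by
  set c := riseFact (1 + γ) (n - 1) with hc
  have hcpos : 0 < c := by
    rw [hc, riseFact]
    apply Finset.prod_pos
    intro i _
    positivity
  have hsum : (∑ k ∈ Finset.Icc 1 n,
      (n.choose k : ℝ) * riseFact (1 - γ) (k - 1) * riseFact γ (n - k)) = gfG γ n := by
    rw [← Finset.Ico_add_one_right_eq_Icc, Finset.sum_Ico_eq_sum_range]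
    unfold gfG
    apply Finset.sum_congr rfl
    intro j hj
    have h1 : 1 + j - 1 = j := by omega
    have h2 : n - (1 + j) = n - 1 - j := by omega
    rw [h1, h2, add_comm 1 j]
  have hgf : gfG γ n = c := by
    have h := gamma_mul_gfG γ n hn
    have hrc : riseFact γ n = γ * c := by
      obtain ⟨m, rfl⟩ : ∃ m, n = m + 1 := ⟨n - 1, by omega⟩
      rw [riseFact_shift, hc]
      norm_num
    rw [hrc] at h
    exact mul_left_cancel₀ (ne_of_gt hγ0) h
  rw [← Finset.sum_div, hsum, hgf, div_self (ne_of_gt hcpos)]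
end

section
/- For ψ ∈ [0,1), γ ∈ (0, ψ+1) and every integer n ≥ 1, the distribution of the number of occupied boxes of the (γ, ψ) Gnedin–Fisher model is a probability distribution on {1,…,n}: ∑_{k=1}^{n} C(n−1, k−1) · (n!/k!) · V(n,k) = 1, where C(n−1,k−1) is the binomial coefficient. -/
/-- Key polynomial recursion for the Gibbs weights, in shifted variables. -/
lemma gf_rec (γ ψ : ℝ) (hψ0 : 0 ≤ ψ) (hψ1 : ψ < 1) (hγ0 : 0 < γ) (hγ1 : γ < ψ + 1)
    (a b : ℕ) :
    riseFact γ a * riseFact (1 - ψ) b * riseFact (1 - γ + ψ) b /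
      (riseFact (1 + ψ) (a + b) * riseFact (1 + γ - ψ) (a + b))
    = riseFact γ a * riseFact (1 - ψ) (b + 1) * riseFact (1 - γ + ψ) (b + 1) /
      (riseFact (1 + ψ) (a + b + 1) * riseFact (1 + γ - ψ) (a + b + 1))
    + ((a : ℝ) + 2 * b + 2) *
      (riseFact γ (a + 1) * riseFact (1 - ψ) b * riseFact (1 - γ + ψ) b /
        (riseFact (1 + ψ) (a + b + 1) * riseFact (1 + γ - ψ) (a + b + 1))) := by
  have h1 : (0:ℝ) < 1 + ψ := by linarith
  have h2 : (0:ℝ) < 1 + γ - ψ := by linarith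
  have d1 := riseFact_pos h1 (a + b)
  have d2 := riseFact_pos h2 (a + b)
  have c1 : (0:ℝ) < 1 + ψ + (a + b : ℕ) := by positivity
  have c2 : (0:ℝ) < 1 + γ - ψ + (a + b : ℕ) := by positivity
  rw [riseFact_succ (1 + ψ), riseFact_succ (1 + γ - ψ), riseFact_succ (1 - ψ),
    riseFact_succ (1 - γ + ψ), riseFact_succ γ]
  field_simp
  push_cast
  ring

/-- The recursion in the original variables. -/
lemma gf_rec' (γ ψ : ℝ) (hψ0 : 0 ≤ ψ) (hψ1 : ψ < 1) (hγ0 : 0 < γ) (hγ1 : γ < ψ + 1)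
    {n k : ℕ} (hk1 : 1 ≤ k) (hkn : k ≤ n) :
    gfWeight γ ψ n k
      = gfWeight γ ψ (n + 1) (k + 1) + ((n : ℝ) + k) * gfWeight γ ψ (n + 1) k := by
  obtain ⟨b, rfl⟩ : ∃ b, k = b + 1 := ⟨k - 1, by omega⟩
  obtain ⟨a, rfl⟩ : ∃ a, n = a + b + 1 := ⟨n - (b + 1), by omega⟩
  have := gf_rec γ ψ hψ0 hψ1 hγ0 hγ1 a b
  unfold gfWeight
  have h1 : a + b + 1 - (b + 1) = a := by omega
  have h2 : a + b + 1 + 1 - (b + 1 + 1) = a := by omega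
  have h3 : a + b + 1 - 1 = a + b := by omega
  have h4 : a + b + 1 + 1 - 1 = a + b + 1 := by omega
  have h5 : a + b + 1 + 1 - (b + 1) = a + 1 := by omega
  have h6 : b + 1 - 1 = b := by omega
  have h7 : b + 1 + 1 - 1 = b + 1 := by omega
  rw [h1, h2, h3, h4, h5, h6, h7]
  convert this using 2
  push_cast
  ring

lemma sum_Icc_one (N : ℕ) (f : ℕ → ℝ) :
    ∑ k ∈ Finset.Icc 1 N, f k = ∑ i ∈ Finset.range N, f (i + 1) := by
  induction N with
  | zero => simp
  | succ m ih =>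
      rw [Finset.sum_range_succ, ← ih, ← Finset.sum_Icc_succ_top (by omega)]

/-- The binomial identity used in the inductive step (natural form, cast to `ℝ`). -/
lemma choose_id (m j : ℕ) :
    ((m : ℝ) + 2) * ((m + 1).choose (j + 1)) =
      ((m : ℝ) + j + 3) * (m.choose (j + 1)) + ((j : ℝ) + 2) * (m.choose j) := by
  have hp : ((m + 1).choose (j + 1) : ℝ) = m.choose j + m.choose (j + 1) := by
    exact_mod_cast congrArg (Nat.cast (R := ℝ)) (Nat.choose_succ_succ m j)
  have hs : ((m : ℝ) + 1) * (m.choose j) = ((m + 1).choose (j + 1) : ℝ) * (j + 1) := by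
    exact_mod_cast congrArg (Nat.cast (R := ℝ)) (Nat.add_one_mul_choose_eq m j)
  rw [hp] at hs ⊢
  nlinarith [hs]

/-- The Lah-number recursion, in real (factorial-quotient) form. -/
lemma lah_step (m j : ℕ) :
    (((m + 1).choose (j + 1)) : ℝ) * ((Nat.factorial (m + 2) : ℝ) / (Nat.factorial (j + 2) : ℝ))
    = (((m:ℝ) + 1) + ((j:ℝ) + 2)) * ((m.choose (j + 1) : ℝ) *
          ((Nat.factorial (m + 1) : ℝ) / (Nat.factorial (j + 2) : ℝ)))
      + ((m.choose j) : ℝ) * ((Nat.factorial (m + 1) : ℝ) / (Nat.factorial (j + 1) : ℝ)) := by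
  have key := choose_id m j
  have hfac1 : (Nat.factorial (m + 2) : ℝ) = (m + 2) * Nat.factorial (m + 1) := by
    rw [Nat.factorial_succ]; push_cast; ring
  have hfac2 : (Nat.factorial (j + 2) : ℝ) = (j + 2) * Nat.factorial (j + 1) := by
    rw [Nat.factorial_succ]; push_cast; ring
  have hj1 : (Nat.factorial (j + 1) : ℝ) ≠ 0 := by
    exact_mod_cast Nat.factorial_ne_zero (j + 1)
  have hj2 : ((j:ℝ) + 2) ≠ 0 := by positivity
  calc (((m + 1).choose (j + 1)) : ℝ) * ((Nat.factorial (m + 2) : ℝ) / (Nat.factorial (j + 2) : ℝ))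
      = (((m:ℝ) + 2) * ((m + 1).choose (j + 1))) *
          ((Nat.factorial (m + 1) : ℝ) / (Nat.factorial (j + 2) : ℝ)) := by rw [hfac1]; ring
    _ = (((m:ℝ) + j + 3) * (m.choose (j + 1)) + ((j:ℝ) + 2) * (m.choose j)) *
          ((Nat.factorial (m + 1) : ℝ) / (Nat.factorial (j + 2) : ℝ)) := by rw [key]
    _ = _ := by rw [hfac2]; field_simp; ring

/-- The law of the number of occupied boxes of the `(γ, ψ)` Gnedin–Fisher model,
`P(K_n = k) = C(n-1, k-1) (n!/k!) V(n,k)`, is a probability distribution on `{1, …, n}`. -/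
theorem gnedin_fisher_two_param_blocks_sum_to_one (γ ψ : ℝ)
    (hψ0 : 0 ≤ ψ) (hψ1 : ψ < 1) (hγ0 : 0 < γ) (hγ1 : γ < ψ + 1)
    (n : ℕ) (hn : 1 ≤ n) :
    ∑ k ∈ Finset.Icc 1 n,
        ((n - 1).choose (k - 1) : ℝ) * ((Nat.factorial n : ℝ) / (Nat.factorial k : ℝ)) *
          gfWeight γ ψ n k = 1 := by
  induction n, hn using Nat.le_induction with
  | base =>
      simp [gfWeight, riseFact, Nat.factorial]
  | succ n hn ih =>
      rw [sum_Icc_one] at ih ⊢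
      set g : ℕ → ℝ := fun i => ((n : ℝ) + (i + 1)) * (((n - 1).choose i : ℝ) *
          ((Nat.factorial n : ℝ) / (Nat.factorial (i + 1) : ℝ)) *
          gfWeight γ ψ (n + 1) (i + 1)) with hg_def
      set h : ℕ → ℝ := fun i => (if i = 0 then 0 else ((n - 1).choose (i - 1) : ℝ) *
          ((Nat.factorial n : ℝ) / (Nat.factorial i : ℝ)) *
          gfWeight γ ψ (n + 1) (i + 1)) with hh_def
      have hff : ∀ i ∈ Finset.range (n + 1),
          ((n + 1 - 1).choose (i + 1 - 1) : ℝ) *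
              ((Nat.factorial (n + 1) : ℝ) / (Nat.factorial (i + 1) : ℝ)) *
            gfWeight γ ψ (n + 1) (i + 1) = g i + h i := by
        intro i _
        simp only [hg_def, hh_def, Nat.add_sub_cancel]
        rcases Nat.eq_zero_or_pos i with rfl | hi
        · simp [Nat.factorial_succ]
          ring
        · obtain ⟨j, rfl⟩ : ∃ j, i = j + 1 := ⟨i - 1, by omega⟩
          obtain ⟨m, rfl⟩ : ∃ m, n = m + 1 := ⟨n - 1, by omega⟩
          simp only [Nat.add_sub_cancel, if_neg (Nat.succ_ne_zero j)]
          have hl := lah_step m j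
          have e1 : m + 1 + 1 = m + 2 := rfl
          have e2 : j + 1 + 1 = j + 2 := rfl
          rw [e1, e2]
          push_cast
          push_cast at hl
          linear_combination gfWeight γ ψ (m + 2) (j + 2) * hl
      rw [Finset.sum_congr rfl hff, Finset.sum_add_distrib]
      have hg : ∑ i ∈ Finset.range (n + 1), g i = ∑ i ∈ Finset.range n, g i := by
        rw [Finset.sum_range_succ]
        have : ((n - 1).choose n : ℝ) = 0 := by
          rw [Nat.choose_eq_zero_of_lt (by omega)]; norm_num
        simp [hg_def, this]
      have hh : ∑ i ∈ Finset.range (n + 1), h i =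
          ∑ i ∈ Finset.range n, h (i + 1) := by
        rw [Finset.sum_range_succ']
        simp [hh_def]
      rw [hg, hh, ← Finset.sum_add_distrib]
      rw [← ih]
      refine Finset.sum_congr rfl fun i hi => ?_
      simp only [Finset.mem_range] at hi
      simp only [hg_def, hh_def, if_neg (Nat.succ_ne_zero i), Nat.add_sub_cancel]
      have hrec := gf_rec' γ ψ hψ0 hψ1 hγ0 hγ1 (k := i + 1) (n := n) (by omega) (by omega)
      rw [hrec]
      push_cast
      ring
end

section
/- For ψ ∈ [0,1) and γ ∈ (0, ψ+1), the shifted generalized Waring mixing law of the (γ, ψ) Gnedin–Fisher model is a probability distribution on the positive integers: ∑_{ξ=1}^{∞} [Γ(γ+1−ψ)·Γ(1+ψ)/Γ(γ)] · (1−ψ)_{ξ−1} · (1−γ+ψ)_{ξ−1} / ((ξ−1)!·ξ!) = 1. -/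
/-- The shifted generalized Waring mixing law of the `(γ, ψ)` Gnedin–Fisher model. -/
noncomputable def gfMix (γ ψ : ℝ) (ξ : ℕ) : ℝ :=
  Real.Gamma (γ + 1 - ψ) * Real.Gamma (1 + ψ) / Real.Gamma γ *
    (riseFact (1 - ψ) (ξ - 1) * riseFact (1 - γ + ψ) (ξ - 1)) /
    ((Nat.factorial (ξ - 1) : ℝ) * (Nat.factorial ξ : ℝ))

lemma Gamma_add_nat {x : ℝ} (hx : 0 < x) (m : ℕ) :
    Real.Gamma (x + m) = Real.Gamma x * riseFact x m := by
  induction m with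
  | zero => simp [riseFact_zero]
  | succ n ih =>
    have hxn : x + n ≠ 0 := by positivity
    have : (x + ((n : ℕ) + 1 : ℕ) : ℝ) = (x + n) + 1 := by push_cast; ring
    rw [this, Real.Gamma_add_one hxn, ih, riseFact_succ]; ring

lemma riseFact_fact_rec (a : ℝ) (j : ℕ) :
    riseFact a (j + 1) / (Nat.factorial (j + 1) : ℝ) * ((j : ℝ) + 1)
      = riseFact a j / (Nat.factorial j : ℝ) * (a + j) := by
  have hfac : (Nat.factorial (j + 1) : ℝ) = ((j : ℝ) + 1) * Nat.factorial j := by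
    push_cast [Nat.factorial_succ]; ring
  have hj : (Nat.factorial j : ℝ) ≠ 0 := by positivity
  rw [riseFact_succ, hfac]
  field_simp

lemma riseFact_div_factorial_le_one {a : ℝ} (ha : 0 < a) (ha1 : a ≤ 1) (j : ℕ) :
    riseFact a j / (Nat.factorial j : ℝ) ≤ 1 := by
  induction j with
  | zero => simp [riseFact_zero]
  | succ n ih =>
    have hn1 : (0:ℝ) < (n : ℝ) + 1 := by positivity
    have h1 : riseFact a (n + 1) / (Nat.factorial (n + 1) : ℝ)
        = riseFact a n / (Nat.factorial n : ℝ) * (a + n) / ((n : ℝ) + 1) := by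
      rw [eq_div_iff (ne_of_gt hn1)]
      exact riseFact_fact_rec a n
    have h2 : (a + n) / ((n : ℝ) + 1) ≤ 1 := by
      rw [div_le_one hn1]
      have : (0:ℝ) ≤ n := Nat.cast_nonneg n
      linarith
    have h3 : (0:ℝ) ≤ riseFact a n / (Nat.factorial n : ℝ) :=
      div_nonneg (riseFact_pos ha n).le (by positivity)
    calc riseFact a (n + 1) / (Nat.factorial (n + 1) : ℝ)
        = (riseFact a n / (Nat.factorial n : ℝ)) * ((a + n) / ((n : ℝ) + 1)) := by
          rw [h1, mul_div_assoc]
      _ ≤ 1 * 1 := mul_le_mul ih h2 (by positivity) (by norm_num)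
      _ = 1 := by ring

open Set MeasureTheory

lemma summable_riseFact_mul_pow {a : ℝ} (ha : 0 < a) (ha1 : a ≤ 1) {t : ℝ}
    (ht0 : 0 ≤ t) (ht1 : t < 1) :
    Summable fun j : ℕ => riseFact a j / (Nat.factorial j : ℝ) * t ^ j := by
  refine Summable.of_norm_bounded (summable_geometric_of_lt_one ht0 ht1) fun j => ?_
  have hnn : (0:ℝ) ≤ riseFact a j / (Nat.factorial j : ℝ) :=
    div_nonneg (riseFact_pos ha j).le (by positivity)
  rw [Real.norm_eq_abs, abs_mul, abs_of_nonneg hnn, abs_pow, abs_of_nonneg ht0]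
  calc riseFact a j / (Nat.factorial j : ℝ) * t ^ j ≤ 1 * t ^ j :=
        mul_le_mul_of_nonneg_right (riseFact_div_factorial_le_one ha ha1 j) (by positivity)
    _ = t ^ j := one_mul _

lemma binomial_tsum {a : ℝ} (ha : 0 < a) (ha1 : a ≤ 1) {x : ℝ} (hx0 : 0 ≤ x) (hx1 : x < 1) :
    ∑' j : ℕ, riseFact a j / (Nat.factorial j : ℝ) * x ^ j = (1 - x) ^ (-a) := by
  set c : ℕ → ℝ := fun j => riseFact a j / (Nat.factorial j : ℝ) with hc
  show (∑' j : ℕ, c j * x ^ j) = (1 - x) ^ (-a)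
  have hc0 : ∀ j, 0 ≤ c j := fun j =>
    div_nonneg (riseFact_pos ha j).le (by positivity)
  have hcrec : ∀ j : ℕ, c (j + 1) * ((j : ℝ) + 1) = c j * (a + j) :=
    fun j => riseFact_fact_rec a j
  have hc1 : ∀ j, c j ≤ 1 := fun j => riseFact_div_factorial_le_one ha ha1 j
  set r : ℝ := (1 + x) / 2 with hr
  have hxr : x < r := by rw [hr]; linarith
  have hr0 : 0 < r := by rw [hr]; linarith
  have hr1 : r < 1 := by rw [hr]; linarith
  have hrn : ‖r‖ < 1 := by rw [Real.norm_eq_abs, abs_of_pos hr0]; exact hr1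
  have hu : Summable (fun j : ℕ => (j : ℝ) * r ^ (j - 1)) := by
    have h := summable_pow_mul_geometric_of_norm_lt_one 1 hrn (R := ℝ)
    refine (h.mul_left r⁻¹).congr fun n => ?_
    cases n with
    | zero => simp
    | succ m =>
      have : r ^ (m + 1) = r ^ m * r := pow_succ r m
      simp only [Nat.add_sub_cancel, pow_one, this]
      field_simp
  have ht : IsOpen (Ioo (-r) r) := isOpen_Ioo
  have h't : IsPreconnected (Ioo (-r) r) := (convex_Ioo _ _).isPreconnected
  have hg : ∀ (j : ℕ) (y : ℝ), HasDerivAt (fun z => c j * z ^ j) (c j * ((j : ℝ) * y ^ (j - 1))) y :=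
    fun j y => (hasDerivAt_pow j y).const_mul (c j)
  have hg' : ∀ (j : ℕ) (y : ℝ), y ∈ Ioo (-r) r →
      ‖c j * ((j : ℝ) * y ^ (j - 1))‖ ≤ (j : ℝ) * r ^ (j - 1) := by
    intro j y hy
    have hya : |y| ≤ r := by rw [abs_le]; exact ⟨hy.1.le, hy.2.le⟩
    rw [Real.norm_eq_abs, abs_mul, abs_mul, abs_of_nonneg (hc0 j), Nat.abs_cast, abs_pow]
    calc c j * ((j : ℝ) * |y| ^ (j - 1)) ≤ 1 * ((j : ℝ) * r ^ (j - 1)) := by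
          refine mul_le_mul (hc1 j) ?_ (by positivity) (by norm_num)
          exact mul_le_mul_of_nonneg_left (pow_le_pow_left₀ (abs_nonneg y) hya _) (Nat.cast_nonneg j)
      _ = (j : ℝ) * r ^ (j - 1) := one_mul _
  have h0t : (0 : ℝ) ∈ Ioo (-r) r := ⟨by linarith, hr0⟩
  have hg0 : Summable fun j : ℕ => c j * (0 : ℝ) ^ j := by
    apply summable_of_ne_finset_zero (s := ({0} : Finset ℕ))
    intro j hj
    have : j ≠ 0 := by simpa using hj
    simp [zero_pow this]
  have hf : ∀ y ∈ Ioo (-r) r, HasDerivAt (fun z => ∑' j : ℕ, c j * z ^ j)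
      (∑' j : ℕ, c j * ((j : ℝ) * y ^ (j - 1))) y := fun y hy =>
    hasDerivAt_tsum_of_isPreconnected hu ht h't (fun j z _ => hg j z) hg' h0t hg0 hy
  have hmem : ∀ y ∈ Icc (0:ℝ) x, y ∈ Ioo (-r) r := fun y hy =>
    ⟨by linarith [hy.1], lt_of_le_of_lt hy.2 hxr⟩
  have hS1 : ∀ y ∈ Icc (0:ℝ) x, Summable (fun j : ℕ => c j * y ^ j) := fun y hy =>
    summable_riseFact_mul_pow ha ha1 hy.1 (lt_of_le_of_lt hy.2 hx1)
  have hS2 : ∀ y ∈ Icc (0:ℝ) x, Summable (fun j : ℕ => c j * ((j : ℝ) * y ^ (j - 1))) := by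
    intro y hy
    exact Summable.of_norm_bounded hu fun j => hg' j y (hmem y hy)
  have hS3 : ∀ y ∈ Icc (0:ℝ) x, Summable (fun j : ℕ => (c j * ((j : ℝ) * y ^ (j - 1))) * y) :=
    fun y hy => (hS2 y hy).mul_right y
  have key : ∀ y ∈ Icc (0:ℝ) x,
      (1 - y) * (∑' j : ℕ, c j * ((j : ℝ) * y ^ (j - 1))) = a * ∑' j : ℕ, c j * y ^ j := by
    intro y hy
    have hD := hS2 y hy
    have hshift : (∑' j : ℕ, c j * ((j : ℝ) * y ^ (j - 1)))
        = ∑' j : ℕ, c (j + 1) * (((j : ℝ) + 1) * y ^ j) := by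
      rw [Summable.tsum_eq_zero_add hD]
      simp only [Nat.cast_zero, zero_mul, mul_zero, zero_add, Nat.add_sub_cancel]
      push_cast
      rfl
    have hterm : ∀ j : ℕ, c (j + 1) * (((j : ℝ) + 1) * y ^ j)
        = a * (c j * y ^ j) + (c j * ((j : ℝ) * y ^ (j - 1))) * y := by
      intro j
      have h1 : c (j + 1) * (((j : ℝ) + 1) * y ^ j) = (c (j+1) * ((j:ℝ)+1)) * y ^ j := by ring
      rw [h1, hcrec j]
      cases j with
      | zero => simp [mul_comm]
      | succ m =>
        simp only [Nat.add_sub_cancel]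
        have hps : y ^ (m + 1) = y ^ m * y := pow_succ y m
        push_cast
        linear_combination (c (m + 1) * ((m : ℝ) + 1)) * hps
    have hsplit : (∑' j : ℕ, c (j + 1) * (((j : ℝ) + 1) * y ^ j))
        = a * (∑' j : ℕ, c j * y ^ j) + (∑' j : ℕ, c j * ((j : ℝ) * y ^ (j - 1))) * y := by
      calc (∑' j : ℕ, c (j + 1) * (((j : ℝ) + 1) * y ^ j))
          = ∑' j : ℕ, (a * (c j * y ^ j) + (c j * ((j : ℝ) * y ^ (j - 1))) * y) :=
            tsum_congr hterm
        _ = (∑' j : ℕ, a * (c j * y ^ j)) + ∑' j : ℕ, (c j * ((j : ℝ) * y ^ (j - 1))) * y :=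
            Summable.tsum_add ((hS1 y hy).mul_left a) (hS3 y hy)
        _ = a * (∑' j : ℕ, c j * y ^ j) + (∑' j : ℕ, c j * ((j : ℝ) * y ^ (j - 1))) * y := by
            rw [tsum_mul_left, tsum_mul_right]
    linear_combination hshift.trans hsplit
  have hder : ∀ y ∈ Icc (0:ℝ) x,
      HasDerivAt (fun z => (∑' j : ℕ, c j * z ^ j) * (1 - z) ^ a) 0 y := by
    intro y hy
    have h1y : (0:ℝ) < 1 - y := by
      have := hy.2; linarith
    have hinner : HasDerivAt (fun z : ℝ => 1 - z) (-1) y := (hasDerivAt_id y).const_sub 1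
    have houter : HasDerivAt (fun w : ℝ => w ^ a) (a * (1 - y) ^ (a - 1)) (1 - y) :=
      Real.hasDerivAt_rpow_const (Or.inl (ne_of_gt h1y))
    have hrp : HasDerivAt (fun z : ℝ => (1 - z) ^ a) (a * (1 - y) ^ (a - 1) * (-1)) y :=
      HasDerivAt.comp y houter hinner
    have hmul := (hf y (hmem y hy)).mul hrp
    refine hmul.congr_deriv ?_
    symm
    have e1 : (1 - y) ^ a = (1 - y) ^ (a - 1) * (1 - y) := by
      rw [← Real.rpow_add_one (ne_of_gt h1y) (a - 1)]; ring_nf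
    rw [e1]
    linear_combination (-(1 - y) ^ (a - 1)) * key y hy
  have hconst := constant_of_has_deriv_right_zero
    (f := fun z => (∑' j : ℕ, c j * z ^ j) * (1 - z) ^ a)
    (fun y hy => ((hder y hy).continuousAt).continuousWithinAt)
    (fun y hy => ((hder y (Ico_subset_Icc_self hy)).hasDerivWithinAt))
  have hx' := hconst x (right_mem_Icc.mpr hx0)
  have hf0 : (∑' j : ℕ, c j * (0:ℝ) ^ j) = 1 := by
    rw [tsum_eq_single 0 (by intro j hj; simp [zero_pow hj])]
    simp [hc, riseFact_zero]
  rw [hf0] at hx'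
  simp only [sub_zero, Real.one_rpow, mul_one] at hx'
  have hP : (0:ℝ) < (1 - x) ^ a := Real.rpow_pos_of_pos (by linarith) a
  rw [Real.rpow_neg (by linarith : (0:ℝ) ≤ 1 - x)]
  exact eq_inv_of_mul_eq_one_left hx'

lemma betaIntegrable {x y : ℝ} (hx : 0 < x) (hy : 0 < y) :
    IntegrableOn (fun t : ℝ => t ^ (x - 1) * (1 - t) ^ (y - 1)) (Ioo 0 1) volume := by
  have hC := Complex.betaIntegral_convergent (u := (x : ℂ)) (v := (y : ℂ)) (by simpa) (by simpa)
  rw [intervalIntegrable_iff_integrableOn_Ioc_of_le (by norm_num : (0:ℝ) ≤ 1)] at hC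
  have hN : IntegrableOn (fun t : ℝ => ‖(t:ℂ) ^ ((x:ℂ) - 1) * (1 - (t:ℂ)) ^ ((y:ℂ) - 1)‖)
      (Ioc 0 1) volume := hC.norm
  have hN' := hN.mono_set Ioo_subset_Ioc_self
  refine hN'.congr_fun (fun t ht => ?_) measurableSet_Ioo
  have ht0 : (0:ℝ) < t := ht.1
  have ht1 : (0:ℝ) < 1 - t := by linarith [ht.2]
  simp only [norm_mul]
  rw [show ((1 : ℂ) - (t : ℝ)) = ((1 - t : ℝ) : ℂ) by push_cast; ring]
  rw [Complex.norm_cpow_eq_rpow_re_of_pos ht0, Complex.norm_cpow_eq_rpow_re_of_pos ht1]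
  norm_num

lemma realBeta {x y : ℝ} (hx : 0 < x) (hy : 0 < y) :
    ∫ t in Ioo (0:ℝ) 1, t ^ (x - 1) * (1 - t) ^ (y - 1)
      = Real.Gamma x * Real.Gamma y / Real.Gamma (x + y) := by
  have h := Complex.Gamma_mul_Gamma_eq_betaIntegral (s := (x : ℂ)) (t := (y : ℂ))
    (by simpa) (by simpa)
  have hbeta : Complex.betaIntegral x y
      = ((∫ t in Ioo (0:ℝ) 1, t ^ (x - 1) * (1 - t) ^ (y - 1) : ℝ) : ℂ) := by
    rw [Complex.betaIntegral, intervalIntegral.integral_of_le (by norm_num : (0:ℝ) ≤ 1),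
      integral_Ioc_eq_integral_Ioo]
    calc (∫ t in Ioo (0:ℝ) 1, (t:ℂ) ^ ((x:ℂ)-1) * (1-(t:ℂ)) ^ ((y:ℂ)-1))
        = ∫ t in Ioo (0:ℝ) 1, ((t ^ (x-1) * (1-t) ^ (y-1) : ℝ) : ℂ) := by
          refine setIntegral_congr_fun measurableSet_Ioo fun t ht => ?_
          have ht0 : (0:ℝ) ≤ t := ht.1.le
          have ht1 : (0:ℝ) ≤ 1 - t := by linarith [ht.2.le]
          rw [show ((1 : ℂ) - (t : ℝ)) = ((1 - t : ℝ) : ℂ) by push_cast; ring,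
            show ((x:ℂ) - 1) = ((x - 1 : ℝ) : ℂ) by push_cast; ring,
            show ((y:ℂ) - 1) = ((y - 1 : ℝ) : ℂ) by push_cast; ring,
            ← Complex.ofReal_cpow ht0, ← Complex.ofReal_cpow ht1, ← Complex.ofReal_mul]
      _ = _ := integral_ofReal
  rw [hbeta] at h
  have hxy : ((x : ℂ) + (y : ℂ)) = ((x + y : ℝ) : ℂ) := by push_cast; ring
  rw [hxy, Complex.Gamma_ofReal, Complex.Gamma_ofReal, Complex.Gamma_ofReal,
    ← Complex.ofReal_mul, ← Complex.ofReal_mul] at h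
  have h' : Real.Gamma x * Real.Gamma y
      = Real.Gamma (x + y) * ∫ t in Ioo (0:ℝ) 1, t ^ (x - 1) * (1 - t) ^ (y - 1) :=
    Complex.ofReal_inj.mp h
  have hpos : 0 < Real.Gamma (x + y) := Real.Gamma_pos_of_pos (by linarith)
  rw [h']
  field_simp

lemma lbeta {x y : ℝ} (hx : 0 < x) (hy : 0 < y) :
    ∫⁻ t in Ioo (0:ℝ) 1, ENNReal.ofReal (t ^ (x - 1) * (1 - t) ^ (y - 1))
      = ENNReal.ofReal (Real.Gamma x * Real.Gamma y / Real.Gamma (x + y)) := by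
  rw [← realBeta hx hy, ← ofReal_integral_eq_lintegral_ofReal (betaIntegrable hx hy) ?_]
  filter_upwards [ae_restrict_mem measurableSet_Ioo] with t ht
  have ht0 : (0:ℝ) < t := ht.1
  have ht1 : (0:ℝ) < 1 - t := by linarith [ht.2]
  positivity

/-- The shifted generalized Waring mixing law of the `(γ, ψ)` Gnedin–Fisher model is
a probability distribution on the positive integers. -/
theorem gnedin_fisher_two_param_mixing_law_sums_to_one (γ ψ : ℝ)
    (hψ0 : 0 ≤ ψ) (hψ1 : ψ < 1) (hγ0 : 0 < γ) (hγ1 : γ < ψ + 1) :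
    ∑' j : ℕ, gfMix γ ψ (j + 1) = 1 := by
  have ha : 0 < 1 - ψ := by linarith
  have ha1 : (1:ℝ) - ψ ≤ 1 := by linarith
  have hb : 0 < 1 - γ + ψ := by linarith
  set a : ℝ := 1 - ψ with ha_eq
  set b : ℝ := 1 - γ + ψ with hb_eq
  have h2b : 0 < 2 - b := by rw [hb_eq]; linarith
  have hGb : 0 < Real.Gamma b := Real.Gamma_pos_of_pos hb
  have hG2b : 0 < Real.Gamma (2 - b) := Real.Gamma_pos_of_pos h2b
  have hGg : 0 < Real.Gamma γ := Real.Gamma_pos_of_pos hγ0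
  set c : ℕ → ℝ := fun j => riseFact a j / (Nat.factorial j : ℝ) with hcdef
  have hc0 : ∀ j, 0 ≤ c j := fun j =>
    div_nonneg (riseFact_pos ha j).le (by positivity)
  set G : ℕ → ℝ :=
    fun j => c j * (Real.Gamma (b + j) * Real.Gamma (2 - b) / Real.Gamma ((j:ℝ) + 2)) with hGdef
  have hGnn : ∀ j, 0 ≤ G j := by
    intro j
    have h1 : 0 < Real.Gamma (b + j) := Real.Gamma_pos_of_pos (by positivity)
    have h2 : 0 < Real.Gamma ((j:ℝ) + 2) := Real.Gamma_pos_of_pos (by positivity)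
    exact mul_nonneg (hc0 j) (by positivity)
  -- per-term lintegral identity
  have hstep1 : ∀ j : ℕ,
      (∫⁻ t in Ioo (0:ℝ) 1, ENNReal.ofReal (c j * t ^ j * (t ^ (b-1) * (1-t) ^ (1-b))))
        = ENNReal.ofReal (G j) := by
    intro j
    have hbj : 0 < b + (j:ℝ) := by positivity
    have hL := lbeta hbj h2b
    calc (∫⁻ t in Ioo (0:ℝ) 1, ENNReal.ofReal (c j * t ^ j * (t ^ (b-1) * (1-t) ^ (1-b))))
        = ∫⁻ t in Ioo (0:ℝ) 1, ENNReal.ofReal (c j)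
            * ENNReal.ofReal (t ^ ((b + (j:ℝ)) - 1) * (1-t) ^ ((2 - b) - 1)) := by
          refine setLIntegral_congr_fun measurableSet_Ioo
            (fun t ht => ?_)
          have ht0 : (0:ℝ) < t := ht.1
          rw [← ENNReal.ofReal_mul (hc0 j)]
          congr 1
          rw [show ((b + (j:ℝ)) - 1) = (b - 1) + (j:ℝ) by ring, Real.rpow_add ht0,
            Real.rpow_natCast, show ((2 - b) - 1 : ℝ) = 1 - b by ring]
          ring
      _ = ENNReal.ofReal (c j)
            * ∫⁻ t in Ioo (0:ℝ) 1, ENNReal.ofReal (t ^ ((b + (j:ℝ)) - 1) * (1-t) ^ ((2 - b) - 1)) :=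
          lintegral_const_mul' _ _ ENNReal.ofReal_ne_top
      _ = ENNReal.ofReal (c j) * ENNReal.ofReal
            (Real.Gamma (b + j) * Real.Gamma (2 - b) / Real.Gamma ((b + (j:ℝ)) + (2 - b))) := by
          rw [hL]
      _ = ENNReal.ofReal (G j) := by
          rw [← ENNReal.ofReal_mul (hc0 j), show ((b + (j:ℝ)) + (2 - b)) = (j:ℝ) + 2 by ring]
  -- measurability
  have hmeas : ∀ j : ℕ, AEMeasurable
      (fun t : ℝ => ENNReal.ofReal (c j * t ^ j * (t ^ (b-1) * (1-t) ^ (1-b))))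
      (volume.restrict (Ioo (0:ℝ) 1)) := by
    intro j
    refine ContinuousOn.aemeasurable (fun t ht => ?_) measurableSet_Ioo
    have ht0 : t ≠ 0 := ne_of_gt ht.1
    have ht1 : (1:ℝ) - t ≠ 0 := by have := ht.2; intro h; linarith
    apply ContinuousAt.continuousWithinAt
    refine ENNReal.continuous_ofReal.continuousAt.comp (ContinuousAt.mul (ContinuousAt.mul
      continuousAt_const (continuousAt_pow t j)) (ContinuousAt.mul ?_ ?_))
    · exact Real.continuousAt_rpow_const t (b-1) (Or.inl ht0)
    · exact (Real.continuousAt_rpow_const (1-t) (1-b) (Or.inl ht1)).comp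
        ((continuous_const.sub continuous_id).continuousAt)
  -- pointwise sum of the series under the integral
  have htsum_pt : ∀ t ∈ Ioo (0:ℝ) 1,
      (∑' j : ℕ, ENNReal.ofReal (c j * t ^ j * (t ^ (b-1) * (1-t) ^ (1-b))))
        = ENNReal.ofReal (t ^ (b-1) * (1-t) ^ (γ-1)) := by
    intro t ht
    have ht0 : (0:ℝ) < t := ht.1
    have ht1 : (0:ℝ) < 1 - t := by linarith [ht.2]
    have hsc : Summable fun j : ℕ => c j * t ^ j :=
      summable_riseFact_mul_pow ha ha1 ht0.le ht.2
    have hS : Summable fun j : ℕ => c j * t ^ j * (t ^ (b-1) * (1-t) ^ (1-b)) :=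
      hsc.mul_right _
    have hnn : ∀ j : ℕ, 0 ≤ c j * t ^ j * (t ^ (b-1) * (1-t) ^ (1-b)) := by
      intro j
      have := hc0 j
      positivity
    rw [← ENNReal.ofReal_tsum_of_nonneg hnn hS]
    congr 1
    rw [tsum_mul_right,
      show (∑' j : ℕ, c j * t ^ j) = (1 - t) ^ (-a) from binomial_tsum ha ha1 ht0.le ht.2]
    have hab : (1 - t) ^ (-a) * (1-t) ^ (1-b) = (1-t) ^ (γ - 1) := by
      rw [← Real.rpow_add ht1, show -a + (1 - b) = γ - 1 by rw [ha_eq, hb_eq]; ring]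
    calc (1 - t) ^ (-a) * (t ^ (b-1) * (1-t) ^ (1-b))
        = t ^ (b-1) * ((1 - t) ^ (-a) * (1-t) ^ (1-b)) := by ring
      _ = t ^ (b-1) * (1-t) ^ (γ-1) := by rw [hab]
  -- Tonelli
  have hT : (∑' j : ℕ, ENNReal.ofReal (G j))
      = ENNReal.ofReal (Real.Gamma b * Real.Gamma γ / Real.Gamma (b + γ)) := by
    calc (∑' j : ℕ, ENNReal.ofReal (G j))
        = ∑' j : ℕ, ∫⁻ t in Ioo (0:ℝ) 1,
            ENNReal.ofReal (c j * t ^ j * (t ^ (b-1) * (1-t) ^ (1-b))) :=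
          tsum_congr fun j => (hstep1 j).symm
      _ = ∫⁻ t in Ioo (0:ℝ) 1, ∑' j : ℕ,
            ENNReal.ofReal (c j * t ^ j * (t ^ (b-1) * (1-t) ^ (1-b))) :=
          (lintegral_tsum hmeas).symm
      _ = ∫⁻ t in Ioo (0:ℝ) 1, ENNReal.ofReal (t ^ (b-1) * (1-t) ^ (γ-1)) :=
          setLIntegral_congr_fun measurableSet_Ioo htsum_pt
      _ = ENNReal.ofReal (Real.Gamma b * Real.Gamma γ / Real.Gamma (b + γ)) := lbeta hb hγ0
  -- back to the reals
  have hGbg : 0 < Real.Gamma (b + γ) := Real.Gamma_pos_of_pos (by positivity)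
  have hsumG : (∑' j : ℕ, G j) = Real.Gamma b * Real.Gamma γ / Real.Gamma (b + γ) := by
    have h1 := congrArg ENNReal.toReal hT
    rw [ENNReal.tsum_toReal_eq (fun j => ENNReal.ofReal_ne_top)] at h1
    rw [ENNReal.toReal_ofReal (by positivity)] at h1
    rw [← h1]
    exact (tsum_congr fun j => (ENNReal.toReal_ofReal (hGnn j))).symm
  -- express gfMix through G
  set κ : ℝ := Real.Gamma (γ + 1 - ψ) * Real.Gamma (1 + ψ) / Real.Gamma γ
      / (Real.Gamma b * Real.Gamma (2 - b)) with hκ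
  have hrep : ∀ j : ℕ, gfMix γ ψ (j + 1) = κ * G j := by
    intro j
    have hG1 : Real.Gamma (b + (j:ℕ)) = Real.Gamma b * riseFact b j := Gamma_add_nat hb j
    have hG2 : Real.Gamma ((j:ℝ) + 2) = (Nat.factorial (j+1) : ℝ) := by
      rw [← Real.Gamma_nat_eq_factorial (j + 1)]
      congr 1
      push_cast
      ring
    have hfj : (Nat.factorial j : ℝ) ≠ 0 := by positivity
    have hfj1 : (Nat.factorial (j+1) : ℝ) ≠ 0 := by positivity
    simp only [gfMix, Nat.add_sub_cancel, hGdef, hcdef, hκ]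
    rw [hG1, hG2, ← ha_eq, ← hb_eq]
    field_simp
  have h2bγ : (2 - b : ℝ) = γ + 1 - ψ := by rw [hb_eq]; ring
  have hbγ : (b + γ : ℝ) = 1 + ψ := by rw [hb_eq]; ring
  have hGψ : 0 < Real.Gamma (1 + ψ) := Real.Gamma_pos_of_pos (by linarith)
  have hGγψ : 0 < Real.Gamma (γ + 1 - ψ) := by rw [← h2bγ]; exact hG2b
  calc (∑' j : ℕ, gfMix γ ψ (j + 1)) = ∑' j : ℕ, κ * G j := tsum_congr hrep
    _ = κ * ∑' j : ℕ, G j := tsum_mul_left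
    _ = κ * (Real.Gamma b * Real.Gamma γ / Real.Gamma (b + γ)) := by rw [hsumG]
    _ = 1 := by
        rw [hκ, h2bγ, hbγ]
        field_simp
end

section
/- Let ψ ∈ [0,1), γ ∈ (0, ψ+1) and let 1 ≤ k ≤ n be integers. Then for every integer ξ ≥ k, the Bayes identity holds: w(ξ) · (ξ−1)!·ξ!/((ξ−k)!·(ξ+n−1)!) = π(ξ; n,k) · V(n,k), where π(ξ; n,k) := [Γ(n+ψ)·Γ(n+γ−ψ)/Γ(n+γ−k)] · (k−ψ)_{ξ−k} · (k−γ+ψ)_{ξ−k} / ((ξ−k)!·(n+ξ−1)!). -/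
lemma riseFact_add (x : ℝ) (a b : ℕ) :
    riseFact x (a + b) = riseFact x a * riseFact (x + a) b := by
  unfold riseFact
  rw [Finset.prod_range_add]
  congr 1
  apply Finset.prod_congr rfl
  intro i _
  push_cast; ring

lemma Gamma_riseFact {x : ℝ} (hx : 0 < x) (m : ℕ) :
    Real.Gamma (x + m) = riseFact x m * Real.Gamma x := by
  induction m with
  | zero => simp [riseFact]
  | succ m ih =>
    have : x + (m + 1 : ℕ) = (x + m) + 1 := by push_cast; ring
    rw [this, Real.Gamma_add_one (by positivity), ih]
    unfold riseFact
    rw [Finset.prod_range_succ]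
    ring


/-- The posterior distribution of the total number of species given `K_n = k`:
a shifted generalized Waring distribution. -/
noncomputable def gfPosterior (γ ψ : ℝ) (n k ξ : ℕ) : ℝ :=
  Real.Gamma ((n : ℝ) + ψ) * Real.Gamma ((n : ℝ) + γ - ψ) /
      Real.Gamma ((n : ℝ) + γ - k) *
    (riseFact ((k : ℝ) - ψ) (ξ - k) * riseFact ((k : ℝ) - γ + ψ) (ξ - k)) /
    ((Nat.factorial (ξ - k) : ℝ) * (Nat.factorial (n + ξ - 1) : ℝ))

/-- The Bayes identity: prior times likelihood equals posterior times marginal,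
i.e. `w(ξ) · (ξ-1)! ξ! / ((ξ-k)! (ξ+n-1)!) = π(ξ; n, k) · V(n, k)`. -/
theorem gnedin_fisher_bayes_identity (γ ψ : ℝ)
    (hψ0 : 0 ≤ ψ) (hψ1 : ψ < 1) (hγ0 : 0 < γ) (hγ1 : γ < ψ + 1)
    (n k : ℕ) (hk : 1 ≤ k) (hkn : k ≤ n) :
    ∀ ξ : ℕ, k ≤ ξ →
      gfMix γ ψ ξ *
          ((Nat.factorial (ξ - 1) : ℝ) * (Nat.factorial ξ : ℝ) /
            ((Nat.factorial (ξ - k) : ℝ) * (Nat.factorial (ξ + n - 1) : ℝ))) =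
        gfPosterior γ ψ n k ξ * gfWeight γ ψ n k := by
  intro ξ hξ
  have hn : 1 ≤ n := le_trans hk hkn
  -- positivity facts
  have hp1 : (0:ℝ) < 1 - ψ := by linarith
  have hp2 : (0:ℝ) < 1 - γ + ψ := by linarith
  have hp3 : (0:ℝ) < 1 + ψ := by linarith
  have hp4 : (0:ℝ) < 1 + γ - ψ := by linarith
  have hkR : (1:ℝ) ≤ (k:ℝ) := by exact_mod_cast hk
  have hp5 : (0:ℝ) < (k:ℝ) - ψ := by linarith
  have hp6 : (0:ℝ) < (k:ℝ) - γ + ψ := by linarith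
  -- split rising factorials
  have hsplit : ξ - 1 = (k - 1) + (ξ - k) := by omega
  have hc1 : ((k - 1 : ℕ) : ℝ) = (k : ℝ) - 1 := by
    have : ((k : ℝ)) = ((k - 1 : ℕ) : ℝ) + 1 := by
      push_cast [Nat.cast_sub hk]; ring
    linarith
  have h1 : riseFact (1 - ψ) (ξ - 1)
      = riseFact (1 - ψ) (k - 1) * riseFact ((k : ℝ) - ψ) (ξ - k) := by
    rw [hsplit, riseFact_add, hc1]
    ring_nf
  have h2 : riseFact (1 - γ + ψ) (ξ - 1)
      = riseFact (1 - γ + ψ) (k - 1) * riseFact ((k : ℝ) - γ + ψ) (ξ - k) := by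
    rw [hsplit, riseFact_add, hc1]
    ring_nf
  -- Gamma rewrites
  have hcn : ((n - 1 : ℕ) : ℝ) = (n : ℝ) - 1 := by
    push_cast [Nat.cast_sub hn]; ring
  have hcnk : ((n - k : ℕ) : ℝ) = (n : ℝ) - (k : ℝ) := by
    push_cast [Nat.cast_sub hkn]; ring
  have hG1 : Real.Gamma ((n : ℝ) + ψ) = riseFact (1 + ψ) (n - 1) * Real.Gamma (1 + ψ) := by
    have : (n : ℝ) + ψ = (1 + ψ) + ((n - 1 : ℕ) : ℝ) := by rw [hcn]; ring
    rw [this, Gamma_riseFact hp3]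
  have hG2 : Real.Gamma ((n : ℝ) + γ - ψ)
      = riseFact (1 + γ - ψ) (n - 1) * Real.Gamma (1 + γ - ψ) := by
    have : (n : ℝ) + γ - ψ = (1 + γ - ψ) + ((n - 1 : ℕ) : ℝ) := by rw [hcn]; ring
    rw [this, Gamma_riseFact hp4]
  have hG3 : Real.Gamma ((n : ℝ) + γ - (k : ℝ))
      = riseFact γ (n - k) * Real.Gamma γ := by
    have : (n : ℝ) + γ - (k : ℝ) = γ + ((n - k : ℕ) : ℝ) := by rw [hcnk]; ring
    rw [this, Gamma_riseFact hγ0]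
  have hfl : ξ + n - 1 = n + ξ - 1 := by omega
  have hγψ : γ + 1 - ψ = 1 + γ - ψ := by ring
  -- nonzeroness
  have hGγ : Real.Gamma γ ≠ 0 := (Real.Gamma_pos_of_pos hγ0).ne'
  have hG1' : Real.Gamma (1 + ψ) ≠ 0 := (Real.Gamma_pos_of_pos hp3).ne'
  have hG2' : Real.Gamma (1 + γ - ψ) ≠ 0 := (Real.Gamma_pos_of_pos hp4).ne'
  have hr1 : riseFact (1 + ψ) (n - 1) ≠ 0 := (riseFact_pos hp3 _).ne'
  have hr2 : riseFact (1 + γ - ψ) (n - 1) ≠ 0 := (riseFact_pos hp4 _).ne'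
  have hf1 : ((ξ - 1).factorial : ℝ) ≠ 0 := Nat.cast_ne_zero.2 (Nat.factorial_ne_zero _)
  have hf2 : (ξ.factorial : ℝ) ≠ 0 := Nat.cast_ne_zero.2 (Nat.factorial_ne_zero _)
  have hf3 : ((ξ - k).factorial : ℝ) ≠ 0 := Nat.cast_ne_zero.2 (Nat.factorial_ne_zero _)
  have hf4 : ((n + ξ - 1).factorial : ℝ) ≠ 0 := Nat.cast_ne_zero.2 (Nat.factorial_ne_zero _)
  have hrγ : riseFact γ (n - k) ≠ 0 := (riseFact_pos hγ0 _).ne'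
  unfold gfMix gfPosterior gfWeight
  rw [h1, h2, hG1, hG2, hG3, hfl, hγψ]
  field_simp [hGγ, hG1', hG2', hr1, hr2, hrγ, hf1, hf2, hf3, hf4]
end

section
/- For ψ ∈ [0,1) and γ ∈ (0, ψ+1), the shifted generalized Waring mixing law w(ξ) has power-like tail decay of exponent 1+γ: lim_{ξ→∞} ξ^{1+γ} · w(ξ) = Γ(1+γ−ψ)·Γ(1+ψ) / (Γ(1−ψ)·Γ(1−γ+ψ)·Γ(γ)). -/
open Filter

/-- The shifted generalized Waring mixing law has power-like tail decay of
exponent `1 + γ`: `ξ^(1+γ) w(ξ) → Γ(1+γ-ψ)Γ(1+ψ)/(Γ(1-ψ)Γ(1-γ+ψ)Γ(γ))`. -/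
theorem gnedin_fisher_mixing_law_tail (γ ψ : ℝ)
    (hψ0 : 0 ≤ ψ) (hψ1 : ψ < 1) (hγ0 : 0 < γ) (hγ1 : γ < ψ + 1) :
    Tendsto (fun ξ : ℕ => (ξ : ℝ) ^ (1 + γ) * gfMix γ ψ ξ) atTop
      (nhds (Real.Gamma (1 + γ - ψ) * Real.Gamma (1 + ψ) /
        (Real.Gamma (1 - ψ) * Real.Gamma (1 - γ + ψ) * Real.Gamma γ))) := by
  have h1ψ : (0:ℝ) < 1 - ψ := by linarith
  have h2ψ : (0:ℝ) < 1 - γ + ψ := by linarith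
  set C : ℝ := Real.Gamma (γ + 1 - ψ) * Real.Gamma (1 + ψ) / Real.Gamma γ with hCdef
  set g1 : ℝ := Real.Gamma (1 - ψ) with hg1def
  set g2 : ℝ := Real.Gamma (1 - γ + ψ) with hg2def
  have hg1 : 0 < g1 := Real.Gamma_pos_of_pos h1ψ
  have hg2 : 0 < g2 := Real.Gamma_pos_of_pos h2ψ
  have key : Tendsto (fun n : ℕ =>
      C / (Real.GammaSeq (1-ψ) n * Real.GammaSeq (1-γ+ψ) n) *
      ((1 + 1/(n:ℝ)) ^ γ * ((n:ℝ)/((n:ℝ) + (1-ψ))) * ((n:ℝ)/((n:ℝ) + (1-γ+ψ)))))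
      atTop (nhds (C / (g1*g2) * (1 * 1 * 1))) := by
    apply Tendsto.mul
    · exact tendsto_const_nhds.div
        ((Real.GammaSeq_tendsto_Gamma _).mul (Real.GammaSeq_tendsto_Gamma _))
        (by positivity)
    · refine Tendsto.mul (Tendsto.mul ?_ (tendsto_natCast_div_add_atTop _))
        (tendsto_natCast_div_add_atTop _)
      have h0 : Tendsto (fun n:ℕ => 1 + 1/(n:ℝ)) atTop (nhds 1) := by
        simpa using (tendsto_const_nhds (x := (1:ℝ))).add
          (tendsto_one_div_atTop_nhds_zero_nat : Tendsto (fun n : ℕ => 1 / (n:ℝ)) atTop (nhds 0))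
      have h1 := ((Real.continuousAt_rpow_const 1 γ (Or.inl one_ne_zero)).tendsto).comp h0
      simpa [Function.comp_def] using h1
  rw [← tendsto_add_atTop_iff_nat 1]
  have hLeq : Real.Gamma (1 + γ - ψ) * Real.Gamma (1 + ψ) / (g1 * g2 * Real.Gamma γ)
      = C / (g1*g2) * (1*1*1) := by
    have hγΓ : (0:ℝ) < Real.Gamma γ := Real.Gamma_pos_of_pos hγ0
    rw [hCdef, show (1 + γ - ψ) = γ + 1 - ψ by ring]
    rw [div_div, mul_one, mul_one]
    ring
  rw [hLeq]
  refine key.congr' ?_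
  filter_upwards [eventually_ge_atTop 1] with n hn
  have hx : (0:ℝ) < (n:ℝ) := by exact_mod_cast hn
  set x : ℝ := (n:ℝ) with hxdef
  have hF : (0:ℝ) < (Nat.factorial n : ℝ) := by positivity
  have hR : ∀ s:ℝ, 0 < s → riseFact s n = x^s * (Nat.factorial n : ℝ) /
      (Real.GammaSeq s n * (s + x)) := by
    intro s hs
    have hrf : 0 < riseFact s n := by
      rw [riseFact]
      exact Finset.prod_pos (fun i _ => by positivity)
    have hsx : 0 < s + x := by positivity
    have hG : Real.GammaSeq s n = x^s * (Nat.factorial n : ℝ) / (riseFact s n * (s + x)) := by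
      rw [Real.GammaSeq, riseFact, Finset.prod_range_succ]
    have hGpos : 0 < Real.GammaSeq s n := by rw [hG]; positivity
    rw [hG]
    field_simp
  have hGpos : ∀ s:ℝ, 0 < s → 0 < Real.GammaSeq s n := by
    intro s hs
    rw [Real.GammaSeq]
    have hP : 0 < ∏ j ∈ Finset.range (n+1), (s + (j:ℝ)) :=
      Finset.prod_pos (fun i _ => by positivity)
    positivity
  have hG1 := hGpos (1-ψ) h1ψ
  have hG2 := hGpos (1-γ+ψ) h2ψ
  have hBpos : (0:ℝ) < x ^ γ := Real.rpow_pos_of_pos hx γ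
  have h2 : (1 + 1/x) ^ γ = (x+1)^γ / x^γ := by
    rw [show 1 + 1/x = (x+1)/x by field_simp, Real.div_rpow (by positivity) hx.le]
  have h1 : (x+1)^(1+γ) = (x+1) * (x+1)^γ := by
    rw [Real.rpow_add (by positivity), Real.rpow_one]
  have h3 : x^(1-ψ) * x^(1-γ+ψ) * x^γ = x * x := by
    rw [← Real.rpow_add hx, ← Real.rpow_add hx,
      show (1-ψ) + (1-γ+ψ) + γ = ((2:ℕ):ℝ) by push_cast; ring, Real.rpow_natCast]
    ring
  show _ = (↑(n+1) : ℝ)^(1+γ) * gfMix γ ψ (n+1)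
  rw [gfMix]
  simp only [Nat.add_sub_cancel, Nat.factorial_succ]
  rw [hR (1-ψ) h1ψ, hR (1-γ+ψ) h2ψ]
  push_cast
  rw [← hxdef, h1, h2]
  set F := (Nat.factorial n : ℝ) with hFdef
  set G1' := Real.GammaSeq (1-ψ) n with hG1def
  set G2' := Real.GammaSeq (1-γ+ψ) n with hG2def
  set A := (x+1)^γ with hAdef
  set B := x^γ with hBdef
  set p := x^(1-ψ) with hpdef
  set q := x^(1-γ+ψ) with hqdef
  clear_value F G1' G2' A B p q C g1 g2
  have hd3 : x + (1-ψ) ≠ 0 := by positivity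
  have hd4 : x + (1-γ+ψ) ≠ 0 := by positivity
  have hd1 : (1-ψ) + x ≠ 0 := by positivity
  have hd2 : (1-γ+ψ) + x ≠ 0 := by positivity
  have hCg : C * Real.Gamma γ = Real.Gamma (γ+1-ψ) * Real.Gamma (1+ψ) := by
    rw [hCdef]
    field_simp
  field_simp
  linear_combination (A*x^2*(1-ψ+x)*(1-γ+ψ+x)) * hCg -
    (Real.Gamma (γ+1-ψ)*Real.Gamma (1+ψ)*A*(x+(1-ψ))*(x+(1-γ+ψ))) * h3
end

section
/- For all real a > 0, η > 0 and ρ > 0, the univariate generalized Waring distribution is a probability distribution on the nonnegative integers: ∑_{i=0}^{∞} [(ρ)_η / i!] · (a)_i · (η)_i / (a+ρ)_{η+i} = 1, where for a real exponent t > 0 the rising factorial is (x)_t := Γ(x+t)/Γ(x). -/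
open Real MeasureTheory Set

-- integrability of t^(s-1) e^{-bt} on Ioi 0
lemma integ_aux {s b : ℝ} (hs : 0 < s) (hb : 0 < b) :
    IntegrableOn (fun t : ℝ => t ^ (s - 1) * Real.exp (-(b * t))) (Ioi 0) := by
  have h := integrableOn_rpow_mul_exp_neg_mul_rpow (s := s - 1) (p := 1) (b := b)
    (by linarith) one_pos hb
  refine h.congr_fun (fun x hx => ?_) measurableSet_Ioi
  beta_reduce; rw [Real.rpow_one, neg_mul]

-- lintegral Gamma formula
lemma lint_gamma {s b : ℝ} (hs : 0 < s) (hb : 0 < b) :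
    ∫⁻ t in Ioi (0:ℝ), ENNReal.ofReal (t ^ (s - 1) * Real.exp (-(b * t)))
      = ENNReal.ofReal ((1 / b) ^ s * Real.Gamma s) := by
  rw [← Real.integral_rpow_mul_exp_neg_mul_Ioi hs hb,
    MeasureTheory.ofReal_integral_eq_lintegral_ofReal (integ_aux hs hb) ?_]
  · filter_upwards [self_mem_ae_restrict measurableSet_Ioi] with t ht
    exact mul_nonneg (Real.rpow_nonneg (le_of_lt ht) _) (Real.exp_pos _).le

lemma binom_tsum {a x : ℝ} (ha : 0 < a) (hx0 : 0 ≤ x) (hx1 : x < 1) :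
    ∑' i : ℕ, ENNReal.ofReal (Real.Gamma (a + i) * (x ^ i / i.factorial))
      = ENNReal.ofReal (Real.Gamma a * (1 - x) ^ (-a)) := by
  have hfac : ∀ i : ℕ, (0:ℝ) ≤ x ^ i / i.factorial := fun i =>
    div_nonneg (pow_nonneg hx0 i) (by positivity)
  have key : ∀ i : ℕ, ENNReal.ofReal (Real.Gamma (a + i) * (x ^ i / i.factorial))
      = ∫⁻ t in Ioi (0:ℝ),
          ENNReal.ofReal (t ^ (a - 1) * Real.exp (-t) * ((x * t) ^ i / i.factorial)) := by
    intro i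
    have hai : (0:ℝ) < a + i := by positivity
    have hcongr : ∀ t ∈ Ioi (0:ℝ),
        ENNReal.ofReal (t ^ (a - 1) * Real.exp (-t) * ((x * t) ^ i / i.factorial))
          = ENNReal.ofReal (t ^ (a + i - 1) * Real.exp (-(1 * t))) *
              ENNReal.ofReal (x ^ i / i.factorial) := by
      intro t ht
      rw [← ENNReal.ofReal_mul (mul_nonneg (Real.rpow_nonneg (le_of_lt ht) _)
        (Real.exp_pos _).le)]
      congr 1
      rw [mul_pow, show t ^ (a + (i:ℝ) - 1) = t ^ (a - 1) * t ^ i by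
        rw [← Real.rpow_natCast t i, ← Real.rpow_add ht]; ring_nf]
      rw [one_mul]; ring
    rw [setLIntegral_congr_fun measurableSet_Ioi
      hcongr,
      lintegral_mul_const' _ _ ENNReal.ofReal_ne_top, lint_gamma hai one_pos,
      ← ENNReal.ofReal_mul (mul_nonneg (Real.rpow_nonneg (by norm_num) _)
        (Real.Gamma_nonneg_of_nonneg hai.le))]
    norm_num
  rw [tsum_congr key, ← MeasureTheory.lintegral_tsum (fun i => by
    apply Measurable.aemeasurable; fun_prop)]
  have hpt : ∀ t ∈ Ioi (0:ℝ),
      ∑' i : ℕ, ENNReal.ofReal (t ^ (a - 1) * Real.exp (-t) * ((x * t) ^ i / i.factorial))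
        = ENNReal.ofReal (t ^ (a - 1) * Real.exp (-((1 - x) * t))) := by
    intro t ht
    have hc : (0:ℝ) ≤ t ^ (a - 1) * Real.exp (-t) :=
      mul_nonneg (Real.rpow_nonneg (le_of_lt ht) _) (Real.exp_pos _).le
    have hsum : Summable (fun i : ℕ => t ^ (a - 1) * Real.exp (-t) * ((x * t) ^ i / i.factorial)) :=
      (Real.summable_pow_div_factorial (x * t)).mul_left _
    rw [← ENNReal.ofReal_tsum_of_nonneg (fun i => mul_nonneg hc
      (div_nonneg (pow_nonneg (mul_nonneg hx0 (le_of_lt ht)) _) (by positivity))) hsum]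
    congr 1
    rw [tsum_mul_left]
    have hexp : Real.exp (x * t) = ∑' n : ℕ, (x * t) ^ n / n.factorial := by
      rw [Real.exp_eq_exp_ℝ, NormedSpace.exp_eq_tsum_div]
    rw [← hexp, mul_assoc, ← Real.exp_add]
    ring_nf
  rw [setLIntegral_congr_fun measurableSet_Ioi hpt,
    lint_gamma ha (by linarith), one_div, Real.inv_rpow (by linarith), ← Real.rpow_neg (by linarith),
    mul_comm]

lemma beta_lint {u v : ℝ} (hu : 0 < u) (hv : 0 < v) :
    ∫⁻ x in Ioo (0:ℝ) 1, ENNReal.ofReal (x ^ (u - 1) * (1 - x) ^ (v - 1))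
      = ENNReal.ofReal (Real.Gamma u * Real.Gamma v / Real.Gamma (u + v)) := by
  set f : ℝ → ℝ := fun x => x ^ (u - 1) * (1 - x) ^ (v - 1) with hf
  set g : ℝ → ℂ := fun x => (x:ℂ) ^ ((u:ℂ) - 1) * ((1:ℂ) - (x:ℂ)) ^ ((v:ℂ) - 1) with hgdef
  have hg : IntervalIntegrable g volume 0 1 :=
    Complex.betaIntegral_convergent (by simpa using hu) (by simpa using hv)
  have hcoe : ∀ x ∈ Ioo (0:ℝ) 1, g x = (f x : ℂ) := by
    intro x hx
    have h1 : (0:ℝ) ≤ x := hx.1.le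
    have h2 : (0:ℝ) ≤ 1 - x := by linarith [hx.2]
    simp only [hgdef, hf]
    push_cast
    rw [Complex.ofReal_cpow h1, Complex.ofReal_cpow h2]
    push_cast
    ring
  have h1 : ∀ᵐ x : ℝ, x ≠ (1:ℝ) := by
    rw [Filter.eventually_iff, mem_ae_iff]
    simpa using measure_singleton (1:ℝ)
  -- value of the real interval integral
  have hval : Real.Gamma u * Real.Gamma v = Real.Gamma (u + v) * ∫ x in (0:ℝ)..1, f x := by
    have hβ : Complex.betaIntegral u v = ((∫ x in (0:ℝ)..1, f x : ℝ) : ℂ) := by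
      rw [Complex.betaIntegral, ← intervalIntegral.integral_ofReal]
      refine intervalIntegral.integral_congr_ae ?_
      filter_upwards [h1] with x hx1 hx
      rw [uIoc_of_le (by norm_num : (0:ℝ) ≤ 1)] at hx
      exact hcoe x ⟨hx.1, lt_of_le_of_ne hx.2 hx1⟩
    have := Complex.Gamma_mul_Gamma_eq_betaIntegral
      (s := (u:ℂ)) (t := (v:ℂ)) (by simpa using hu) (by simpa using hv)
    rw [hβ, ← Complex.ofReal_add, Complex.Gamma_ofReal, Complex.Gamma_ofReal,
      Complex.Gamma_ofReal, ← Complex.ofReal_mul, ← Complex.ofReal_mul] at this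
    exact_mod_cast this
  have hint : IntegrableOn f (Ioo (0:ℝ) 1) := by
    have hgint : IntegrableOn g (Ioc (0:ℝ) 1) :=
      (intervalIntegrable_iff_integrableOn_Ioc_of_le (by norm_num)).mp hg
    have hre0 : IntegrableOn (fun x => RCLike.re (g x)) (Ioc (0:ℝ) 1) := hgint.re
    have hre : IntegrableOn (fun x => RCLike.re (g x)) (Ioo (0:ℝ) 1) :=
      hre0.mono_set Ioo_subset_Ioc_self
    exact hre.congr_fun (fun x hx => by show RCLike.re (g x) = f x; rw [hcoe x hx]; simp) measurableSet_Ioo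
  have hnn : 0 ≤ᵐ[volume.restrict (Ioo (0:ℝ) 1)] f := by
    filter_upwards [self_mem_ae_restrict measurableSet_Ioo] with x hx
    exact mul_nonneg (Real.rpow_nonneg hx.1.le _) (Real.rpow_nonneg (by linarith [hx.2]) _)
  rw [← MeasureTheory.ofReal_integral_eq_lintegral_ofReal hint hnn]
  congr 1
  rw [← MeasureTheory.integral_Ioc_eq_integral_Ioo, ← intervalIntegral.integral_of_le
    (by norm_num : (0:ℝ) ≤ 1)]
  have hG : Real.Gamma (u + v) ≠ 0 := (Real.Gamma_pos_of_pos (by linarith)).ne'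
  field_simp [hval]
  linarith [hval]


/-- Rising factorial with real exponent, `(x)_t = Γ(x+t)/Γ(x)`. -/
noncomputable def riseFactR (x t : ℝ) : ℝ := Real.Gamma (x + t) / Real.Gamma x

/-- The univariate generalized Waring distribution with positive real parameters
`a, η, ρ` is a probability distribution on the nonnegative integers. -/
theorem generalized_waring_sums_to_one (a η ρ : ℝ) (ha : 0 < a) (hη : 0 < η) (hρ : 0 < ρ) :
    ∑' i : ℕ,
        (riseFactR ρ η / (Nat.factorial i : ℝ)) * riseFactR a i * riseFactR η i /
          riseFactR (a + ρ) (η + i) = 1 := by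
  set G := Real.Gamma with hG
  set K : ℝ := G (ρ + η) / (G ρ * G a * G η) with hK
  set term : ℕ → ℝ := fun i =>
    (riseFactR ρ η / (Nat.factorial i : ℝ)) * riseFactR a i * riseFactR η i /
      riseFactR (a + ρ) (η + i) with hterm
  have hGpos : ∀ {s : ℝ}, 0 < s → 0 < G s := fun h => Real.Gamma_pos_of_pos h
  have hGρ := hGpos hρ; have hGa := hGpos ha; have hGη := hGpos hη
  have hGaρ := hGpos (by linarith : (0:ℝ) < a + ρ)
  have hKpos : 0 < K := by
    apply div_pos (hGpos (by linarith)); positivity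
  -- rewrite each term
  have hrw : ∀ i : ℕ, term i =
      (K * (G (a + i) * ((1:ℝ) / i.factorial))) *
        (G (η + i) * G (a + ρ) / G (η + i + (a + ρ))) := by
    intro i
    have hfact : (0:ℝ) < i.factorial := by positivity
    have hGd : 0 < G (a + ρ + (η + i)) := hGpos (by positivity)
    have hGd' : G (η + i + (a + ρ)) = G (a + ρ + (η + i)) := by ring_nf
    simp only [hterm, riseFactR, hK, hGd', ← hG]
    field_simp
  have htermnn : ∀ i : ℕ, 0 ≤ term i := by
    intro i
    rw [hrw i]
    have h1 : 0 < G (a + i) := hGpos (by positivity)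
    have h2 : 0 < G (η + i) := hGpos (by positivity)
    have h3 : 0 < G (η + i + (a + ρ)) := hGpos (by positivity)
    positivity
  -- the ENNReal computation
  have hEN : ∑' i : ℕ, ENNReal.ofReal (term i) = 1 := by
    have hstep1 : ∀ i : ℕ, ENNReal.ofReal (term i) =
        ∫⁻ x in Ioo (0:ℝ) 1, ENNReal.ofReal
          ((K * (G (a + i) * ((1:ℝ) / i.factorial))) *
            (x ^ (η + i - 1) * (1 - x) ^ (a + ρ - 1))) := by
      intro i
      have hc : (0:ℝ) ≤ K * (G (a + i) * ((1:ℝ) / i.factorial)) := by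
        have h1 : 0 < G (a + i) := hGpos (by positivity)
        positivity
      have hbeta := beta_lint (u := η + i) (v := a + ρ) (by positivity) (by linarith)
      rw [hrw i, ENNReal.ofReal_mul hc, ← hG] at *
      rw [← hbeta, ← lintegral_const_mul' _ _ ENNReal.ofReal_ne_top]
      refine setLIntegral_congr_fun measurableSet_Ioo ?_
      intro x hx
      beta_reduce; rw [← ENNReal.ofReal_mul hc]
    rw [tsum_congr hstep1, ← MeasureTheory.lintegral_tsum (fun i => by
      apply Measurable.aemeasurable; fun_prop)]
    have hpt : ∀ x ∈ Ioo (0:ℝ) 1,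
        ∑' i : ℕ, ENNReal.ofReal
            ((K * (G (a + i) * ((1:ℝ) / i.factorial))) *
              (x ^ (η + i - 1) * (1 - x) ^ (a + ρ - 1)))
          = ENNReal.ofReal ((K * G a) * (x ^ (η - 1) * (1 - x) ^ (ρ - 1))) := by
      intro x hx
      have hx0 : (0:ℝ) < x := hx.1
      have hx1 : x < 1 := hx.2
      have h1x : (0:ℝ) < 1 - x := by linarith
      have hre : ∀ i : ℕ,
          (K * (G (a + i) * ((1:ℝ) / i.factorial))) *
              (x ^ (η + i - 1) * (1 - x) ^ (a + ρ - 1))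
            = (K * x ^ (η - 1) * (1 - x) ^ (a + ρ - 1)) *
                (G (a + i) * (x ^ i / i.factorial)) := by
        intro i
        rw [show x ^ (η + (i:ℝ) - 1) = x ^ (η - 1) * x ^ i by
          rw [← Real.rpow_natCast x i, ← Real.rpow_add hx0]; ring_nf]
        ring
      simp_rw [hre]
      have hcnn : (0:ℝ) ≤ K * x ^ (η - 1) * (1 - x) ^ (a + ρ - 1) := by positivity
      simp_rw [ENNReal.ofReal_mul hcnn]
      rw [ENNReal.tsum_mul_left, binom_tsum ha hx0.le hx1,
        ← ENNReal.ofReal_mul hcnn]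
      congr 1
      have hpow : (1 - x) ^ (a + ρ - 1) * (1 - x) ^ (-a) = (1 - x) ^ (ρ - 1) := by
        rw [← Real.rpow_add h1x]; ring_nf
      linear_combination (K * x ^ (η - 1) * Real.Gamma a) * hpow
    rw [setLIntegral_congr_fun measurableSet_Ioo hpt]
    have hbeta2 := beta_lint (u := η) (v := ρ) hη hρ
    have hcnn2 : (0:ℝ) ≤ K * G a := by positivity
    simp_rw [ENNReal.ofReal_mul hcnn2]
    rw [lintegral_const_mul' _ _ ENNReal.ofReal_ne_top]
    have : ∀ x : ℝ, x ^ (η - 1) * (1 - x) ^ (ρ - 1)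
        = x ^ (η - 1) * (1 - x) ^ (ρ - 1) := fun _ => rfl
    rw [hbeta2, ← ENNReal.ofReal_mul hcnn2]
    rw [show K * G a * (G η * G ρ / G (η + ρ)) = 1 by
      rw [hK, show η + ρ = ρ + η by ring]
      field_simp
      exact mul_inv_cancel₀ (hGpos (by linarith)).ne']
    exact ENNReal.ofReal_one
  -- back to ℝ
  have hsummable : Summable term := by
    have hne : (∑' i : ℕ, ENNReal.ofReal (term i)) ≠ ⊤ := by rw [hEN]; exact ENNReal.one_ne_top
    have := ENNReal.summable_toReal hne
    refine this.congr fun i => ?_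
    rw [ENNReal.toReal_ofReal (htermnn i)]
  have := ENNReal.ofReal_tsum_of_nonneg htermnn hsummable
  rw [hEN, ← ENNReal.ofReal_one] at this
  have hfin : ∑' i, term i = 1 := by
    have h0 : (0:ℝ) ≤ ∑' i, term i := tsum_nonneg htermnn
    rwa [ENNReal.ofReal_eq_ofReal_iff h0 (by norm_num)] at this
  exact hfin
end
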